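/- arXiv:2208.01885 — 2 statements merged into one kernel-verified Lean document; each statement's English description precedes it below -/
import Mathlib

section
/- Let q be an odd prime power with q ≡ 3 (mod 4), and let a_1, …, a_n ∈ F_q be pairwise distinct. Then at most one index j ∈ {1,…,n} satisfies χ(a_j - a_i) ≠ -1 for all i ≠ j; consequently, the sum over i = 1,…,n of the product over j = 1,…,n of (χ(a_i - a_j) + 1) is at most 2^{n-1}. -/
/-!
Since `q ≡ 3 (mod 4)`, `χ(-1) = -1`, so `χ(-x) = -χ(x)`: of the two differences `a_j - a_k` and
`a_k - a_j` of distinct points, one is a non-square. Hence two distinct indices cannot both be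
dominant. The product for index `i` vanishes unless `i` is dominant, and it is at most `2^(n-1)`
(its factor `j = i` is `1`, the others are at most `2`), so the sum has at most one non-zero term.
-/

open Finset

section QuadraticChar

variable {F : Type*} [Field F] [Fintype F] [DecidableEq F]

theorem quadraticChar_neg_one_of_card_mod_four (h3 : Fintype.card F % 4 = 3) :
    quadraticChar F (-1) = -1 :=
  quadraticChar_neg_one_iff_not_isSquare.mpr fun h => FiniteField.isSquare_neg_one_iff.mp h h3

theorem quadraticChar_neg_of_card_mod_four (h3 : Fintype.card F % 4 = 3) (x : F) :
    quadraticChar F (-x) = -quadraticChar F x := by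
  rw [neg_eq_neg_one_mul, map_mul, quadraticChar_neg_one_of_card_mod_four h3, neg_one_mul]

theorem quadraticChar_eq_neg_one_or_neg_eq_neg_one (h3 : Fintype.card F % 4 = 3) {x : F}
    (hx : x ≠ 0) : quadraticChar F x = -1 ∨ quadraticChar F (-x) = -1 := by
  rw [quadraticChar_neg_of_card_mod_four h3, neg_eq_iff_eq_neg, neg_neg]
  exact (quadraticChar_dichotomy hx).symm

theorem quadraticChar_add_one_nonneg (x : F) : 0 ≤ quadraticChar F x + 1 := by
  rcases eq_or_ne x 0 with rfl | hx
  · simp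
  · rcases quadraticChar_dichotomy hx with h | h <;> simp [h]

theorem quadraticChar_add_one_le_two (x : F) : quadraticChar F x + 1 ≤ 2 := by
  rcases eq_or_ne x 0 with rfl | hx
  · simp
  · rcases quadraticChar_dichotomy hx with h | h <;> simp [h]

end QuadraticChar

section Dominant

variable {F ι : Type*} [Field F] [Fintype F] [DecidableEq F]

def IsQuadraticDominant (a : ι → F) (j : ι) : Prop :=
  ∀ i, i ≠ j → quadraticChar F (a j - a i) ≠ -1

theorem IsQuadraticDominant.eq (h3 : Fintype.card F % 4 = 3) {a : ι → F}
    (ha : Function.Injective a) {j₁ j₂ : ι} (h₁ : IsQuadraticDominant a j₁)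
    (h₂ : IsQuadraticDominant a j₂) : j₁ = j₂ := by
  by_contra hne
  have hx : a j₁ - a j₂ ≠ 0 := sub_ne_zero.mpr (ha.ne hne)
  rcases quadraticChar_eq_neg_one_or_neg_eq_neg_one h3 hx with h | h
  · exact h₁ j₂ (Ne.symm hne) h
  · exact h₂ j₁ hne (by rwa [neg_sub] at h)

variable [Fintype ι]

theorem isQuadraticDominant_of_prod_ne_zero {a : ι → F} {i : ι}
    (h : ∏ j, (quadraticChar F (a i - a j) + 1) ≠ 0) : IsQuadraticDominant a i := by
  intro k _ hk
  exact h (prod_eq_zero (mem_univ k) (by rw [hk, neg_add_cancel]))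

theorem prod_quadraticChar_sub_add_one_le [DecidableEq ι] (a : ι → F) (i : ι) :
    ∏ j, (quadraticChar F (a i - a j) + 1) ≤ 2 ^ (Fintype.card ι - 1) := by
  rw [← prod_erase_mul _ _ (mem_univ i), sub_self, quadraticChar_zero, zero_add, mul_one]
  calc ∏ j ∈ univ.erase i, (quadraticChar F (a i - a j) + 1)
      ≤ ∏ _j ∈ univ.erase i, (2 : ℤ) :=
        prod_le_prod (fun j _ => quadraticChar_add_one_nonneg _)
          (fun j _ => quadraticChar_add_one_le_two _)
    _ = 2 ^ (Fintype.card ι - 1) := by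
        rw [prod_const, card_erase_of_mem (mem_univ i), card_univ]

theorem sum_prod_quadraticChar_sub_add_one_le (h3 : Fintype.card F % 4 = 3) {a : ι → F}
    (ha : Function.Injective a) :
    ∑ i, ∏ j, (quadraticChar F (a i - a j) + 1) ≤ 2 ^ (Fintype.card ι - 1) := by
  classical
  have hsupport : ∑ i with IsQuadraticDominant a i, ∏ j, (quadraticChar F (a i - a j) + 1) =
      ∑ i, ∏ j, (quadraticChar F (a i - a j) + 1) :=
    sum_filter_of_ne fun i _ => isQuadraticDominant_of_prod_ne_zero
  have hcard : #{i | IsQuadraticDominant a i} ≤ 1 :=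
    card_le_one.mpr fun j₁ hj₁ j₂ hj₂ =>
      IsQuadraticDominant.eq h3 ha (mem_filter.mp hj₁).2 (mem_filter.mp hj₂).2
  calc ∑ i, ∏ j, (quadraticChar F (a i - a j) + 1)
      = ∑ i with IsQuadraticDominant a i, ∏ j, (quadraticChar F (a i - a j) + 1) := hsupport.symm
    _ ≤ #{i | IsQuadraticDominant a i} • (2 : ℤ) ^ (Fintype.card ι - 1) :=
        sum_le_card_nsmul _ _ _ fun i _ => prod_quadraticChar_sub_add_one_le a i
    _ ≤ 1 • (2 : ℤ) ^ (Fintype.card ι - 1) := nsmul_le_nsmul_left (by positivity) hcard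
    _ = 2 ^ (Fintype.card ι - 1) := one_nsmul _

end Dominant

theorem at_most_one_dominant_and_sum_bound
    (F : Type*) [Field F] [Fintype F] [DecidableEq F]
    (h3 : Fintype.card F % 4 = 3)
    (n : ℕ) (a : Fin n → F) (ha : Function.Injective a) :
    (∀ j₁ j₂ : Fin n,
        (∀ i : Fin n, i ≠ j₁ → quadraticChar F (a j₁ - a i) ≠ -1) →
        (∀ i : Fin n, i ≠ j₂ → quadraticChar F (a j₂ - a i) ≠ -1) →
        j₁ = j₂) ∧
    (∑ i : Fin n, ∏ j : Fin n, (quadraticChar F (a i - a j) + 1)) ≤ 2 ^ (n - 1) := by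
  exact ⟨fun _ _ => IsQuadraticDominant.eq h3 ha,
    by simpa using sum_prod_quadraticChar_sub_add_one_le h3 ha⟩
end

section
/- Let q be an odd prime power and Q_q the set of squares in F_q. There exist a positive integer n ≤ ⌈log q / log 2⌉ and pairwise distinct a_1, …, a_n ∈ F_q such that the union of the sets Q_q + a_i for i = 1,…,n equals F_q. -/
/-!
The squares `Q` of a finite field satisfy `q < 2 |Q|`, since `u ↦ u²` is at most two-to-one and
only `0` hits `0`. Averaging `|S ∩ (a + Q)|` over all shifts `a` gives `|S| |Q| / q > |S| / 2`, so
for every nonempty `S` some shift of `Q` covers more than half of `S`. Covering greedily, each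
shift leaves fewer than half of the remaining points, and `q` points are gone after
`⌈log₂ q⌉` shifts.
-/

open Finset
open scoped Pointwise

section Shifts

variable {G : Type*} [AddGroup G] [DecidableEq G]

theorem Finset.sum_card_inter_vadd [Fintype G] (S T : Finset G) :
    ∑ a : G, #(S ∩ (a +ᵥ T)) = #S * #T := by
  simp_rw [card_inter_vadd, addConvolution]
  rw [← card_eq_sum_card_fiberwise (fun _ _ => mem_univ _), card_product, card_neg]

theorem Finset.exists_card_lt_two_mul_card_inter_vadd [Fintype G] {S T : Finset G}
    (hT : Fintype.card G < 2 * #T) (hS : S.Nonempty) :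
    ∃ a : G, #S < 2 * #(S ∩ (a +ᵥ T)) := by
  by_contra! h
  have hsum : 2 * (#S * #T) ≤ Fintype.card G * #S := by
    rw [← sum_card_inter_vadd, mul_sum, ← card_univ, ← smul_eq_mul, ← sum_const]
    exact sum_le_sum fun a _ => h a
  nlinarith [hS.card_pos]

/-- `#S + 2 ≤ 2 ^ (n + 1)` is the invariant preserved by the greedy step `#S ↦ ⌊(#S - 1) / 2⌋`;
unlike `#S < 2 ^ n`, it admits `#S = 2 ^ n`. -/
theorem Finset.exists_card_le_subset_add [Fintype G] {T : Finset G}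
    (hT : Fintype.card G < 2 * #T) (n : ℕ) {S : Finset G} (hS : #S + 2 ≤ 2 ^ (n + 1)) :
    ∃ A : Finset G, #A ≤ n ∧ S ⊆ A + T := by
  induction n generalizing S with
  | zero => exact ⟨∅, le_rfl, by simp_all [card_eq_zero]⟩
  | succ n ih =>
    obtain rfl | hS₀ := S.eq_empty_or_nonempty
    · exact ⟨∅, Nat.zero_le _, empty_subset _⟩
    obtain ⟨a, ha⟩ := exists_card_lt_two_mul_card_inter_vadd hT hS₀
    have hrest : #(S \ (a +ᵥ T)) + 2 ≤ 2 ^ (n + 1) := by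
      rw [card_sdiff, inter_comm]
      rw [pow_succ] at hS ⊢
      omega
    obtain ⟨A, hA, hcover⟩ := ih hrest
    refine ⟨insert a A, (card_insert_le a A).trans (by omega), fun x hx => ?_⟩
    by_cases hxa : x ∈ a +ᵥ T
    · exact vadd_finset_subset_add (mem_insert_self a A) hxa
    · exact add_subset_add_right (subset_insert a A) (hcover (mem_sdiff.mpr ⟨hx, hxa⟩))

end Shifts

theorem card_lt_two_mul_card_image_sq (R : Type*) [CommRing R] [NoZeroDivisors R] [Fintype R]
    [DecidableEq R] : Fintype.card R < 2 * #(univ.image fun u : R => u ^ 2) := by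
  have hfiber (b : R) : #{u ∈ univ.erase 0 | u ^ 2 = b} ≤ 2 := by
    obtain ⟨c, rfl⟩ | hb := em (∃ c, c ^ 2 = b)
    · refine (card_le_card fun u hu => ?_).trans (card_le_two (a := c) (b := -c))
      rcases sq_eq_sq_iff_eq_or_eq_neg.mp (mem_filter.mp hu).2 with h | h <;> simp [h]
    · simp [filter_eq_empty_iff.mpr fun u _ hu => hb ⟨u, hu⟩]
  have hnonzero :
      (univ.erase 0).image (fun u : R => u ^ 2) ⊆ (univ.image fun u : R => u ^ 2).erase 0 :=
    fun b hb => by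
      obtain ⟨u, hu, rfl⟩ := mem_image.mp hb
      exact mem_erase.mpr ⟨pow_ne_zero 2 (ne_of_mem_erase hu), mem_image_of_mem _ (mem_univ u)⟩
  have hle := (card_le_mul_card_image (univ.erase (0 : R)) 2 fun b _ => hfiber b).trans
    (Nat.mul_le_mul_left 2 (card_le_card hnonzero))
  have h0 : (0 : R) ∈ univ.image fun u : R => u ^ 2 :=
    mem_image.mpr ⟨0, mem_univ _, zero_pow two_ne_zero⟩
  rw [card_erase_of_mem (mem_univ _), card_univ, card_erase_of_mem h0] at hle
  have := card_pos.mpr ⟨0, h0⟩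
  have := Fintype.card_pos (α := R)
  omega

theorem ceil_log_div_log_two_eq_clog (n : ℕ) : ⌈Real.log n / Real.log 2⌉ = Nat.clog 2 n := by
  have := Real.ceil_logb_natCast (b := 2) (Nat.cast_nonneg (α := ℝ) n)
  rwa [Int.clog_natCast, Nat.cast_ofNat] at this

theorem exists_covering_shifts_general (F : Type*) [Field F] [Fintype F] :
    ∃ n : ℕ, 0 < n ∧
      (n : ℝ) ≤ ⌈Real.log (Fintype.card F) / Real.log 2⌉ ∧
      ∃ a : Fin n → F, Function.Injective a ∧
        (⋃ i : Fin n, {y : F | ∃ u : F, u ^ 2 + a i = y}) = Set.univ := by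
  classical
  have hN : #(univ : Finset F) + 2 ≤ 2 ^ (Nat.clog 2 (Fintype.card F) + 1) := by
    have hle := Nat.le_pow_clog one_lt_two (Fintype.card F)
    have hgt := Nat.one_lt_two_pow (Nat.clog_pos one_lt_two (Fintype.one_lt_card (α := F))).ne'
    rw [card_univ, pow_succ]
    omega
  obtain ⟨A, hA, hcover⟩ :=
    exists_card_le_subset_add (card_lt_two_mul_card_image_sq F) _ hN
  have hy (y : F) : ∃ a ∈ A, ∃ u : F, u ^ 2 + a = y := by
    obtain ⟨a, ha, _, ht, rfl⟩ := mem_add.mp (hcover (mem_univ y))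
    obtain ⟨u, -, rfl⟩ := mem_image.mp ht
    exact ⟨a, ha, u, add_comm _ _⟩
  refine ⟨#A, card_pos.mpr (Nonempty.of_add_left ⟨0, hcover (mem_univ 0)⟩), ?_,
    fun i => A.equivFin.symm i, Subtype.val_injective.comp A.equivFin.symm.injective, ?_⟩
  · rw [ceil_log_div_log_two_eq_clog]
    exact_mod_cast hA
  · refine Set.eq_univ_of_forall fun y => ?_
    obtain ⟨a, ha, u, hu⟩ := hy y
    exact Set.mem_iUnion.mpr ⟨A.equivFin ⟨a, ha⟩, u, by simpa using hu⟩

theorem exists_covering_shifts (F : Type*) [Field F] [Fintype F] [DecidableEq F]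
    (hodd : Odd (Fintype.card F)) :
    ∃ n : ℕ, 0 < n ∧
      (n : ℝ) ≤ ⌈Real.log (Fintype.card F) / Real.log 2⌉ ∧
      ∃ a : Fin n → F, Function.Injective a ∧
        (⋃ i : Fin n, {y : F | ∃ u : F, u ^ 2 + a i = y}) = Set.univ :=
  exists_covering_shifts_general F
end
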